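/- arXiv:2109.07579 — 2 statements merged into one kernel-verified Lean document; each statement's English description precedes it below -/
import Mathlib

section
/- Let k ≥ 1 be an integer and l = 2k − 1. Work in ℝ^{l+1} and set 2ρ = ∑_{i=1}^{l+1} (l + 2 − 2i)·ε_i (the sum of the positive roots ε_i − ε_j, i < j, of A_l). Then: (1) 2ρ = 2·∑_{(i,j) : 1≤i<j≤l+1, j−i>k} (ε_i − ε_j) + ∑_{i=1}^{k} (ε_i − ε_{i+k}); (2) the set Ψ = {ε_i − ε_j : 1 ≤ i < j ≤ l+1 and j − i ≥ k} spans the hyperplane V = {x ∈ ℝ^{l+1} : ∑_{i=1}^{l+1} x_i = 0}; (3) for all β, β′ ∈ Ψ (including β = β′), β + β′ ∉ Φ(A_l). -/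
/-- `eps l i` is the standard basis vector of `ℝ^l` with `1`-based index `i`. -/
def eps (l : ℕ) (i : ℕ) : Fin l → ℝ := fun j => if (j : ℕ) + 1 = i then 1 else 0

/-- The root system `Φ(A_l)` in `ℝ^{l+1}` (here `n = l+1`): the vectors
`ε_a - ε_b` for `a ≠ b`. -/
def PhiA (n : ℕ) : Set (Fin n → ℝ) :=
  {v | ∃ a b, 1 ≤ a ∧ a ≤ n ∧ 1 ≤ b ∧ b ≤ n ∧ a ≠ b ∧ v = eps n a - eps n b}

/-- `Ψ = {ε_i - ε_j : 1 ≤ i < j ≤ l+1, j - i ≥ k}`. -/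
def PsiA_odd (l k : ℕ) : Set (Fin (l + 1) → ℝ) :=
  {v | ∃ i j, 1 ≤ i ∧ i < j ∧ j ≤ l + 1 ∧ k ≤ j - i ∧
      v = eps (l + 1) i - eps (l + 1) j}


/-! Throughout, `l + 1 = 2k`. (1) is checked coordinatewise: coordinate `m` of the right-hand side
is twice the number of pairs `(m, j)` with `j > m + k` minus twice the number of pairs `(i, m)`
with `i < m - k`, plus `1` if `m ≤ k` and `-1` otherwise.
(2) Ψ lies in the sum-zero hyperplane, and each `ε_i - ε_{2k}` is in its span: it lies in Ψ if
`i ≤ k`, and equals `(ε_{i-k} - ε_{2k}) - (ε_{i-k} - ε_i)` otherwise.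
(3) The functional `x ↦ ∑_{i ≤ k} x_i - ∑_{i > k} x_i` equals `2` on every element of Ψ (each
has `i ≤ k < j`), hence `4` on `β + β'`, while it is at most `2` on every root. -/

open Finset

lemma eps_succ {n : ℕ} (i : Fin n) : eps n (i + 1) = Pi.single i 1 := by
  ext t
  simp [eps, Pi.single_apply, Fin.ext_iff]

lemma eps_eq_single {n a : ℕ} (ha : 1 ≤ a) (han : a ≤ n) :
    eps n a = Pi.single ⟨a - 1, by omega⟩ 1 := by
  rw [← eps_succ, Nat.sub_add_cancel ha]

lemma sum_Icc_smul_eps_apply (n : ℕ) (c : ℕ → ℝ) (t : Fin n) :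
    (∑ i ∈ Icc 1 n, c i • eps n i) t = c (t + 1) := by
  simp only [Finset.sum_apply, Pi.smul_apply, eps, smul_eq_mul, mul_ite, mul_one, mul_zero,
    sum_ite_eq, mem_Icc]
  rw [if_pos (by omega)]

lemma sum_Icc_eps_apply (n a b : ℕ) (t : Fin n) :
    (∑ j ∈ Icc a b, eps n j) t = if a ≤ t + 1 ∧ t + 1 ≤ b then 1 else 0 := by
  simp only [Finset.sum_apply, eps, sum_ite_eq, mem_Icc]

lemma sum_far_pairs_apply (n k : ℕ) (t : Fin n) :
    (∑ i ∈ Icc 1 n, ∑ j ∈ Icc (i + k + 1) n, (eps n i - eps n j)) t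
      = ((n - (t + 1 + k) : ℕ) : ℝ) - ((t + 1 - (k + 1) : ℕ) : ℝ) := by
  have hleft : ∑ i ∈ Icc 1 n, ∑ _j ∈ Icc (i + k + 1) n, eps n i
      = ∑ i ∈ Icc 1 n, ((n + 1 - (i + k + 1) : ℕ) : ℝ) • eps n i := by
    simp only [sum_const, Nat.card_Icc, Nat.cast_smul_eq_nsmul]
  have hright : (∑ i ∈ Icc 1 n, ∑ j ∈ Icc (i + k + 1) n, eps n j) t
      = ((t + 1 - (k + 1) : ℕ) : ℝ) := by
    rw [Finset.sum_apply]
    simp only [sum_Icc_eps_apply, sum_boole]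
    have hfilter : {i ∈ Icc 1 n | i + k + 1 ≤ t + 1 ∧ t + 1 ≤ n} = Icc 1 (t + 1 - (k + 1)) := by
      ext i
      simp only [mem_filter, mem_Icc]
      omega
    rw [hfilter, Nat.card_Icc, Nat.add_sub_cancel]
  simp only [sum_sub_distrib]
  rw [Pi.sub_apply, hleft, hright, sum_Icc_smul_eps_apply]
  congr 2
  omega

lemma sum_shift_pairs_apply (n k : ℕ) (t : Fin n) :
    (∑ i ∈ Icc 1 k, (eps n i - eps n (i + k))) t
      = (if t + 1 ≤ k then 1 else 0) - (if k + 1 ≤ t + 1 ∧ t + 1 ≤ 2 * k then 1 else 0) := by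
  have hshift : ∑ i ∈ Icc 1 k, eps n (i + k) = ∑ j ∈ Icc (1 + k) (k + k), eps n j := by
    rw [← map_add_right_Icc, sum_map]
    rfl
  rw [sum_sub_distrib, Pi.sub_apply, hshift, sum_Icc_eps_apply, sum_Icc_eps_apply]
  split_ifs <;> first | rfl | omega

lemma two_rho_eq_far_pairs_add_shift_pairs {k l : ℕ} (hlk : l + 1 = 2 * k) :
    ∑ i ∈ Icc 1 (l + 1), ((l : ℝ) + 2 - 2 * i) • eps (l + 1) i
      = (2 : ℝ) • (∑ i ∈ Icc 1 (l + 1), ∑ j ∈ Icc (i + k + 1) (l + 1),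
            (eps (l + 1) i - eps (l + 1) j))
        + ∑ i ∈ Icc 1 k, (eps (l + 1) i - eps (l + 1) (i + k)) := by
  ext t
  have hlk' : (l : ℝ) + 1 = 2 * k := by exact_mod_cast hlk
  rw [Pi.add_apply, Pi.smul_apply, sum_Icc_smul_eps_apply, sum_far_pairs_apply,
    sum_shift_pairs_apply, smul_eq_mul]
  rcases le_or_gt ((t : ℕ) + 1) k with h | h
  · rw [if_pos h, if_neg (by omega), Nat.sub_eq_zero_of_le (by omega : (t : ℕ) + 1 ≤ k + 1),
      Nat.cast_sub (by omega : (t : ℕ) + 1 + k ≤ l + 1)]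
    push_cast
    linarith
  · rw [if_neg (by omega), if_pos (by omega),
      Nat.sub_eq_zero_of_le (by omega : l + 1 ≤ (t : ℕ) + 1 + k), Nat.cast_sub (by omega : k + 1 ≤ (t : ℕ) + 1)]
    push_cast
    linarith

section SumZeroHyperplane

variable {ι : Type*} [Fintype ι] {S : Set (ι → ℝ)}

lemma sum_eq_zero_of_mem_span (hS : ∀ v ∈ S, ∑ i, v i = 0) {x : ι → ℝ}
    (hx : x ∈ Submodule.span ℝ S) : ∑ i, x i = 0 := by
  induction hx using Submodule.span_induction with
  | mem v hv => exact hS v hv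
  | zero => simp
  | add v w _ _ hv hw => simp [sum_add_distrib, hv, hw]
  | smul a v _ hv => simp [← mul_sum, hv]

variable [DecidableEq ι]

lemma eq_sum_smul_single_sub_single {x : ι → ℝ} (hx : ∑ i, x i = 0) (j : ι) :
    x = ∑ i, x i • (Pi.single i 1 - Pi.single j 1) := by
  simp only [smul_sub, sum_sub_distrib, ← sum_smul, hx, zero_smul, sub_zero]
  exact pi_eq_sum_univ' x

lemma coe_span_eq_setOf_sum_eq_zero (hS : ∀ v ∈ S, ∑ i, v i = 0) (j : ι)
    (hj : ∀ i, Pi.single i 1 - Pi.single j 1 ∈ Submodule.span ℝ S) :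
    (Submodule.span ℝ S : Set (ι → ℝ)) = {x | ∑ i, x i = 0} := by
  refine Set.Subset.antisymm (fun x hx => sum_eq_zero_of_mem_span hS hx) fun x hx => ?_
  rw [SetLike.mem_coe, eq_sum_smul_single_sub_single hx j]
  exact Submodule.sum_mem _ fun i _ => Submodule.smul_mem _ _ (hj i)

end SumZeroHyperplane

lemma sum_eps {n a : ℕ} (ha : 1 ≤ a) (han : a ≤ n) : ∑ t, eps n a t = 1 := by
  simp [eps_eq_single ha han]

lemma sum_eq_zero_of_mem_PsiA_odd {l k : ℕ} {v : Fin (l + 1) → ℝ} (hv : v ∈ PsiA_odd l k) :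
    ∑ t, v t = 0 := by
  obtain ⟨i, j, hi, hij, hj, -, rfl⟩ := hv
  simp only [Pi.sub_apply]
  rw [Finset.sum_sub_distrib, sum_eps hi (by omega), sum_eps (by omega) hj, sub_self]

lemma single_sub_single_last_mem_span_PsiA_odd {l k : ℕ} (hlk : l + 1 = 2 * k) (i : Fin (l + 1)) :
    Pi.single i 1 - Pi.single (Fin.last l) 1 ∈ Submodule.span ℝ (PsiA_odd l k) := by
  have hi := i.isLt
  rw [← eps_succ, ← eps_succ, Fin.val_last]
  rcases le_or_gt ((i : ℕ) + 1) k with h | h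
  · exact Submodule.subset_span ⟨i + 1, l + 1, by omega, by omega, le_rfl, by omega, rfl⟩
  rcases eq_or_lt_of_le (show (i : ℕ) + 1 ≤ l + 1 by omega) with h' | h'
  · rw [h', sub_self]
    exact Submodule.zero_mem _
  have hfar : eps (l + 1) (i + 1 - k) - eps (l + 1) (l + 1) ∈ Submodule.span ℝ (PsiA_odd l k) :=
    Submodule.subset_span ⟨i + 1 - k, l + 1, by omega, by omega, le_rfl, by omega, rfl⟩
  have hnear : eps (l + 1) (i + 1 - k) - eps (l + 1) (i + 1) ∈ Submodule.span ℝ (PsiA_odd l k) :=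
    Submodule.subset_span ⟨i + 1 - k, i + 1, by omega, by omega, by omega, by omega, rfl⟩
  simpa using Submodule.sub_mem _ hfar hnear

lemma coe_span_PsiA_odd {l k : ℕ} (hlk : l + 1 = 2 * k) :
    (Submodule.span ℝ (PsiA_odd l k) : Set (Fin (l + 1) → ℝ)) = {x | ∑ i, x i = 0} :=
  coe_span_eq_setOf_sum_eq_zero (fun _ => sum_eq_zero_of_mem_PsiA_odd) (Fin.last l)
    (single_sub_single_last_mem_span_PsiA_odd hlk)

lemma dotProduct_eps {n a : ℕ} (w : ℕ → ℝ) (ha : 1 ≤ a) (han : a ≤ n) :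
    (fun t : Fin n => w (t + 1)) ⬝ᵥ eps n a = w a := by
  rw [eps_eq_single ha han, dotProduct_single, mul_one, Nat.sub_add_cancel ha]

lemma dotProduct_le_two_of_mem_PhiA {n : ℕ} {w : ℕ → ℝ} (hw : ∀ m, |w m| ≤ 1)
    {v : Fin n → ℝ} (hv : v ∈ PhiA n) : (fun t : Fin n => w (t + 1)) ⬝ᵥ v ≤ 2 := by
  obtain ⟨a, b, ha, han, hb, hbn, -, rfl⟩ := hv
  rw [dotProduct_sub, dotProduct_eps w ha han, dotProduct_eps w hb hbn]
  linarith [(abs_le.mp (hw a)).2, (abs_le.mp (hw b)).1]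

def halfSign (k m : ℕ) : ℝ := if m ≤ k then 1 else -1

lemma abs_halfSign_le_one (k m : ℕ) : |halfSign k m| ≤ 1 := by
  unfold halfSign
  split_ifs <;> norm_num

lemma halfSign_dotProduct_of_mem_PsiA_odd {l k : ℕ} (hlk : l + 1 = 2 * k)
    {v : Fin (l + 1) → ℝ} (hv : v ∈ PsiA_odd l k) :
    (fun t : Fin (l + 1) => halfSign k (t + 1)) ⬝ᵥ v = 2 := by
  obtain ⟨i, j, hi, hij, hj, hkij, rfl⟩ := hv
  rw [dotProduct_sub, dotProduct_eps _ hi (by omega), dotProduct_eps _ (by omega) hj, halfSign,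
    halfSign, if_pos (by omega), if_neg (by omega)]
  norm_num

lemma add_notMem_PhiA_of_mem_PsiA_odd {l k : ℕ} (hlk : l + 1 = 2 * k)
    {β β' : Fin (l + 1) → ℝ} (hβ : β ∈ PsiA_odd l k) (hβ' : β' ∈ PsiA_odd l k) :
    β + β' ∉ PhiA (l + 1) := by
  intro h
  have hle := dotProduct_le_two_of_mem_PhiA (abs_halfSign_le_one k) h
  rw [dotProduct_add, halfSign_dotProduct_of_mem_PsiA_odd hlk hβ,
    halfSign_dotProduct_of_mem_PsiA_odd hlk hβ'] at hle
  norm_num at hle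

/-- Type `A_l`, `l = 2k - 1` odd. Note that `j - i > k` is written `i + k + 1 ≤ j`. -/
theorem stmt_11 (k l : ℕ) (hk : 1 ≤ k) (hl : l = 2 * k - 1) :
    ((∑ i ∈ Finset.Icc 1 (l + 1), ((l : ℝ) + 2 - 2 * i) • eps (l + 1) i)
      = (2 : ℝ) • (∑ i ∈ Finset.Icc 1 (l + 1), ∑ j ∈ Finset.Icc (i + k + 1) (l + 1),
            (eps (l + 1) i - eps (l + 1) j))
        + ∑ i ∈ Finset.Icc 1 k, (eps (l + 1) i - eps (l + 1) (i + k))) ∧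
    (Submodule.span ℝ (PsiA_odd l k) : Set (Fin (l + 1) → ℝ))
      = {x : Fin (l + 1) → ℝ | ∑ i, x i = 0} ∧
    (∀ β ∈ PsiA_odd l k, ∀ β' ∈ PsiA_odd l k, β + β' ∉ PhiA (l + 1)) := by
  have hlk : l + 1 = 2 * k := by omega
  exact ⟨two_rho_eq_far_pairs_add_shift_pairs hlk, coe_span_PsiA_odd hlk,
    fun _ hβ _ hβ' => add_notMem_PhiA_of_mem_PsiA_odd hlk hβ hβ'⟩
end

section
/- Let n ≥ 1 and k ≥ 1 be integers, let Y_1, …, Y_k be nonzero vectors in ℝ^n, and let T ∈ ℝ^n with T ≠ 0. Suppose f₀ : ℝ^n → ℝ is of class C^1, has compact support, is not identically zero, and satisfies ∫_{t∈ℝ} f₀(x + t·Y_i) dt = 0 for every i ∈ {1,…,k} and every x ∈ ℝ^n. Then there exists t₀ ∈ ℝ such that the function f defined by f(x) = f₀(x) − f₀(x + t₀·T) is of class C^1, has compact support, is not identically zero, satisfies ∫_{t∈ℝ} f(x + t·Y_i) dt = 0 for every i and every x ∈ ℝ^n, and satisfies ∫_{t∈ℝ} f(x + t·T) dt = 0 for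 every x ∈ ℝ^n. -/
open MeasureTheory Topology

lemma line_integrable {E : Type*} [NormedAddCommGroup E] [NormedSpace ℝ E]
    [FiniteDimensional ℝ E] [MeasurableSpace E] (f : E → ℝ)
    (hc : Continuous f) (hs : HasCompactSupport f) (v : E) (hv : v ≠ 0) (x : E) :
    Integrable (fun t : ℝ => f (x + t • v)) := by
  have hlin : IsClosedEmbedding (fun t : ℝ => t • v) := by
    have := LinearMap.isClosedEmbedding_of_injective (f := LinearMap.toSpanSingleton ℝ E v)
      (by rw [LinearMap.ker_eq_bot]; exact (smul_left_injective ℝ hv))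
    simpa [LinearMap.toSpanSingleton] using this
  have hmap : IsClosedEmbedding (fun t : ℝ => x + t • v) :=
    (Homeomorph.addLeft x).isClosedEmbedding.comp hlin
  have hcs : HasCompactSupport (fun t : ℝ => f (x + t • v)) :=
    hs.comp_isClosedEmbedding hmap
  exact (hc.comp (by continuity)).integrable_of_hasCompactSupport hcs

/-- Let `Y_1, …, Y_k` be nonzero vectors in `ℝ^n` and `T ≠ 0`. If `f₀` is a nonzero `C¹`
compactly supported function whose integral along every line of direction `Y_i` vanishes,
then there is `t₀ ∈ ℝ` such that `f(x) = f₀(x) - f₀(x + t₀ T)` is `C¹`, compactly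
supported, nonzero, has vanishing integrals along every line of direction `Y_i`, and
also along every line of direction `T`. -/
theorem stmt_15 (n k : ℕ) (hn : 1 ≤ n) (hk : 1 ≤ k)
    (Y : Fin k → EuclideanSpace ℝ (Fin n)) (hY : ∀ i, Y i ≠ 0)
    (T : EuclideanSpace ℝ (Fin n)) (hT : T ≠ 0)
    (f₀ : EuclideanSpace ℝ (Fin n) → ℝ)
    (hf₀C : ContDiff ℝ 1 f₀) (hf₀supp : HasCompactSupport f₀) (hf₀ne : f₀ ≠ 0)
    (hf₀int : ∀ (i : Fin k) (x : EuclideanSpace ℝ (Fin n)),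
      ∫ t : ℝ, f₀ (x + t • Y i) = 0) :
    ∃ t₀ : ℝ,
      ContDiff ℝ 1 (fun x => f₀ x - f₀ (x + t₀ • T)) ∧
      HasCompactSupport (fun x => f₀ x - f₀ (x + t₀ • T)) ∧
      (fun x => f₀ x - f₀ (x + t₀ • T)) ≠ 0 ∧
      (∀ (i : Fin k) (x : EuclideanSpace ℝ (Fin n)),
        ∫ t : ℝ, (f₀ (x + t • Y i) - f₀ (x + t • Y i + t₀ • T)) = 0) ∧
      (∀ x : EuclideanSpace ℝ (Fin n),
        ∫ t : ℝ, (f₀ (x + t • T) - f₀ (x + t • T + t₀ • T)) = 0) := by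
  have hcont : Continuous f₀ := hf₀C.continuous
  -- choose x₀ with f₀ x₀ ≠ 0
  obtain ⟨x₀, hx₀⟩ : ∃ x, f₀ x ≠ 0 := Function.ne_iff.mp hf₀ne
  -- bound on support
  obtain ⟨R, hR⟩ := hf₀supp.isCompact.isBounded.subset_closedBall 0
  have hTn : (0:ℝ) < ‖T‖ := norm_pos_iff.mpr hT
  set t₀ : ℝ := (R + ‖x₀‖ + 1) / ‖T‖ with ht₀def
  have hRnonneg : 0 ≤ R + ‖x₀‖ + 1 := by
    have : 0 ≤ R := by
      have := hR (subset_tsupport f₀ hx₀)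
      simp only [Metric.mem_closedBall, dist_zero_right] at this
      exact le_trans (norm_nonneg _) this
    positivity
  have key : f₀ (x₀ + t₀ • T) = 0 := by
    by_contra h
    have hmem := hR (subset_tsupport f₀ h)
    simp only [Metric.mem_closedBall, dist_zero_right] at hmem
    have h1 : ‖t₀ • T‖ - ‖x₀‖ ≤ ‖x₀ + t₀ • T‖ := by
      have h := norm_sub_le (x₀ + t₀ • T) x₀
      rw [add_sub_cancel_left] at h
      linarith
    have h2 : ‖t₀ • T‖ = R + ‖x₀‖ + 1 := by
      rw [norm_smul, Real.norm_eq_abs, abs_of_nonneg (by positivity), ht₀def,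
        div_mul_cancel₀ _ (ne_of_gt hTn)]
    linarith
  refine ⟨t₀, ?_, ?_, ?_, ?_, ?_⟩
  · exact hf₀C.sub (hf₀C.comp ((contDiff_id).add contDiff_const))
  · have : HasCompactSupport (fun x => f₀ (x + t₀ • T)) :=
      hf₀supp.comp_homeomorph (Homeomorph.addRight (t₀ • T))
    exact hf₀supp.sub this
  · intro hzero
    have := congrFun hzero x₀
    simp only [key, sub_zero, Pi.zero_apply] at this
    exact hx₀ this
  · intro i x
    have hint1 := line_integrable f₀ hcont hf₀supp (Y i) (hY i) x
    have hint2 := line_integrable f₀ hcont hf₀supp (Y i) (hY i) (x + t₀ • T)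
    have hint2' : Integrable (fun t : ℝ => f₀ (x + t • Y i + t₀ • T)) := by
      simpa [add_right_comm] using hint2
    rw [integral_sub hint1 hint2', hf₀int i x]
    have : ∫ t : ℝ, f₀ (x + t • Y i + t₀ • T) = 0 := by
      have := hf₀int i (x + t₀ • T)
      simpa [add_right_comm] using this
    rw [this]; ring
  · intro x
    have hint1 := line_integrable f₀ hcont hf₀supp T hT x
    have hint2 : Integrable (fun t : ℝ => f₀ (x + t • T + t₀ • T)) := by
      have := line_integrable f₀ hcont hf₀supp T hT (x + t₀ • T)
      simpa [add_right_comm] using this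
    rw [integral_sub hint1 hint2]
    have : ∫ t : ℝ, f₀ (x + t • T + t₀ • T) = ∫ t : ℝ, f₀ (x + t • T) := by
      rw [← integral_add_right_eq_self (fun t : ℝ => f₀ (x + t • T)) t₀]
      congr 1; ext t
      rw [add_smul, ← add_assoc]
    rw [this]; ring
end
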